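/- (Proposition 1.) Fix 0 ≤ α < 1 and set h = 0 in the Hamiltonian of the context. For every τ > 0, δ > 0 and C > 0 there exists n₀ such that for every odd N = 2m+1 > n₀, every diagonal matrix D with ρ = U D U, every choice of real coefficients a_1,…,a_N with A = ∑_i a_i σ_i^x satisfying |Tr(A ρ)| ≤ C, and every t with |t| ≤ τ, one has |Tr(exp(−i t H) · A · exp(i t H) · ρ) − Tr(A ρ)| < δ. -/

import Mathlib

open Matrix

/-- Coupling constants `ε(j) = j^{−α}`. -/
noncomputable def eps (α : ℝ) (j : ℕ) : ℝ := (j : ℝ) ^ (-α)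

/-- Kac normalization `𝒩_α = (2 ∑_{j=1}^{m} ε(j))⁻¹` for the odd ring `N = 2m+1`. -/
noncomputable def kacNorm (α : ℝ) (m : ℕ) : ℝ :=
  (2 * ∑ j ∈ Finset.Icc 1 m, eps α j)⁻¹

/-- `σ_i^z`: diagonal matrix with entry `(−1)^{s i}` at configuration `s : Fin (2m+1) → Bool`. -/
noncomputable def sigmaZ (m : ℕ) (i : Fin (2 * m + 1)) :
    Matrix (Fin (2 * m + 1) → Bool) (Fin (2 * m + 1) → Bool) ℂ :=
  Matrix.diagonal fun s => if s i then -1 else 1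

/-- `σ_i^x`: permutation matrix flipping the `i`-th bit. -/
noncomputable def sigmaX (m : ℕ) (i : Fin (2 * m + 1)) :
    Matrix (Fin (2 * m + 1) → Bool) (Fin (2 * m + 1) → Bool) ℂ :=
  fun s s' => if s' = Function.update s i (! s i) then 1 else 0

/-- `U`: the `N`-fold Kronecker product of the Hadamard matrix `(1/√2)[[1,1],[1,−1]]`. -/
noncomputable def hadamardU (m : ℕ) :
    Matrix (Fin (2 * m + 1) → Bool) (Fin (2 * m + 1) → Bool) ℂ :=
  fun s s' => ∏ i : Fin (2 * m + 1),
    (((Real.sqrt 2)⁻¹ : ℝ) : ℂ) * (if s i && s' i then -1 else 1)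

open Fin.NatCast in
/-- Emch–Radin Hamiltonian
`H = 𝒩_α ∑_{i=1}^N ∑_{j=1}^m ε(j) σ_i^z σ_{(i+j) mod N}^z − h ∑_i σ_i^z` on the odd ring
`N = 2m+1` (indices mod `N`). -/
noncomputable def Ham (α h : ℝ) (m : ℕ) :
    Matrix (Fin (2 * m + 1) → Bool) (Fin (2 * m + 1) → Bool) ℂ :=
  ((kacNorm α m : ℝ) : ℂ) • ∑ i : Fin (2 * m + 1), ∑ j ∈ Finset.Icc 1 m,
      ((eps α j : ℝ) : ℂ) • (sigmaZ m i * sigmaZ m (i + (j : Fin (2 * m + 1))))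
    - ((h : ℝ) : ℂ) • ∑ i : Fin (2 * m + 1), sigmaZ m i

/-!
For `h = 0` the Hamiltonian is diagonal in the `σᶻ` basis, with classical energy `E(s)`. A state
`ρ = U D U` that is diagonal in the `σˣ` basis has matrix elements `ρ (flip_k s) s` independent
of `s`, so `Tr(e^{-itH} σˣ_k e^{itH} ρ)` is `Tr(σˣ_k ρ)` times the average over `s` of
`exp(it(E(flip_k s) - E(s)))`. This energy change only involves the `2m` bond signs
`s_k s_{k ± j}`, which are independent and uniform, so the average is
`∏ⱼ cos²(2t𝒩_α ε(j))` for every site `k`. Finally `1 - ∏ⱼ cos² θⱼ ≤ ∑ⱼ θⱼ² ≤ t² / ∑ⱼ ε(j)`,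
and `∑ⱼ j^{-α}` diverges for `α ≤ 1`.
-/

namespace EmchRadin

open Finset Filter Fin.NatCast Fin.CommRing

variable {m : ℕ}

def spin (b : Bool) : ℝ := if b then -1 else 1

lemma spin_not (b : Bool) : spin (!b) = -spin b := by
  cases b <;> norm_num [spin]

lemma spin_xor (a b : Bool) : spin (xor a b) = spin a * spin b := by
  cases a <;> cases b <;> norm_num [spin]

noncomputable def energy (α : ℝ) (m : ℕ) (s : Fin (2 * m + 1) → Bool) : ℝ :=
  kacNorm α m * ∑ i, ∑ j ∈ Icc 1 m,
    eps α j * (spin (s i) * spin (s (i + (j : Fin (2 * m + 1)))))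

lemma sigmaZ_mul_sigmaZ (i i' : Fin (2 * m + 1)) :
    sigmaZ m i * sigmaZ m i' = diagonal fun s => ((spin (s i) * spin (s i') : ℝ) : ℂ) := by
  rw [sigmaZ, sigmaZ, diagonal_mul_diagonal]
  congr 1
  funext s
  simp only [spin]
  split_ifs <;> norm_num

lemma Ham_zero_eq_diagonal (α : ℝ) (m : ℕ) :
    Ham α 0 m = diagonal fun s => (energy α m s : ℂ) := by
  ext s s'
  rcases eq_or_ne s s' with rfl | h
  · simp [Ham, energy, sigmaZ_mul_sigmaZ, Matrix.sum_apply, Finset.mul_sum]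
  · simp [Ham, sigmaZ_mul_sigmaZ, Matrix.sum_apply, h]

lemma exp_smul_Ham_zero (α : ℝ) (m : ℕ) (c : ℂ) :
    NormedSpace.exp (c • Ham α 0 m) = diagonal fun s => Complex.exp (c * energy α m s) := by
  rw [Ham_zero_eq_diagonal, ← diagonal_smul, exp_diagonal]
  congr 1
  funext s
  simp [Complex.exp_eq_exp_ℂ]

def flipAt (k : Fin (2 * m + 1)) (s : Fin (2 * m + 1) → Bool) : Fin (2 * m + 1) → Bool :=
  Function.update s k (!s k)

lemma flipAt_self (k : Fin (2 * m + 1)) (s : Fin (2 * m + 1) → Bool) : flipAt k s k = !s k := by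
  simp [flipAt]

lemma flipAt_of_ne {i k : Fin (2 * m + 1)} (h : i ≠ k) (s : Fin (2 * m + 1) → Bool) :
    flipAt k s i = s i := by
  simp [flipAt, h]

lemma natCast_ne_zero_of_mem_Icc {j : ℕ} (hj : j ∈ Icc 1 m) : (j : Fin (2 * m + 1)) ≠ 0 := by
  rw [mem_Icc] at hj
  rw [Ne, Fin.natCast_eq_zero]
  exact Nat.not_dvd_of_pos_of_lt (by omega) (by omega)

lemma sum_spin_flipAt_mul_sub (k : Fin (2 * m + 1)) (s : Fin (2 * m + 1) → Bool)
    {x : Fin (2 * m + 1)} (hx : x ≠ 0) :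
    ∑ i, (spin (flipAt k s i) * spin (flipAt k s (i + x)) - spin (s i) * spin (s (i + x))) =
      -2 * (spin (s k) * spin (s (k + x)) + spin (s k) * spin (s (k - x))) := by
  have hkx : k - x ≠ k := sub_eq_self.not.mpr hx
  rw [Fintype.sum_eq_add k (k - x) hkx.symm]
  · rw [flipAt_self, flipAt_of_ne (add_ne_left.mpr hx), sub_add_cancel, flipAt_self,
      flipAt_of_ne hkx, spin_not]
    ring
  · rintro i ⟨hik, hikx⟩
    have hix : i + x ≠ k := fun h => hikx (eq_sub_of_add_eq h)
    rw [flipAt_of_ne hik, flipAt_of_ne hix, sub_self]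

lemma energy_flipAt_sub (α : ℝ) (k : Fin (2 * m + 1)) (s : Fin (2 * m + 1) → Bool) :
    energy α m (flipAt k s) - energy α m s = -(2 * kacNorm α m * ∑ j ∈ Icc 1 m, eps α j *
      (spin (s k) * spin (s (k + (j : Fin (2 * m + 1)))) +
        spin (s k) * spin (s (k - (j : Fin (2 * m + 1)))))) := by
  simp only [energy, ← mul_sub, ← Finset.sum_sub_distrib]
  rw [Finset.sum_comm]
  simp only [← Finset.mul_sum]
  rw [Finset.sum_congr rfl fun j hj =>
    congrArg _ (sum_spin_flipAt_mul_sub k s (natCast_ne_zero_of_mem_Icc hj))]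
  simp only [Finset.mul_sum]
  rw [← Finset.sum_neg_distrib]
  refine Finset.sum_congr rfl fun j _ => by ring

lemma hadamardU_flipAt_mul_hadamardU (k : Fin (2 * m + 1)) (s d : Fin (2 * m + 1) → Bool) :
    hadamardU m (flipAt k s) d * hadamardU m d s =
      (2 ^ (2 * m + 1))⁻¹ * if d k then -1 else 1 := by
  have hsq : (((√2)⁻¹ : ℝ) : ℂ) * (((√2)⁻¹ : ℝ) : ℂ) = 2⁻¹ := by
    rw [← Complex.ofReal_mul, ← mul_inv, Real.mul_self_sqrt zero_le_two]
    norm_num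
  have hfactor : ∀ i, (((√2)⁻¹ : ℝ) : ℂ) * (if flipAt k s i && d i then -1 else 1) *
      ((((√2)⁻¹ : ℝ) : ℂ) * (if d i && s i then -1 else 1)) =
        2⁻¹ * if i = k then (if d k then -1 else 1) else 1 := by
    intro i
    rw [mul_mul_mul_comm, hsq]
    rcases eq_or_ne i k with rfl | hik
    · rw [flipAt_self]
      cases s i <;> cases d i <;> simp
    · rw [flipAt_of_ne hik]
      cases s i <;> cases d i <;> simp [hik]
  unfold hadamardU
  rw [← Finset.prod_mul_distrib, Finset.prod_congr rfl fun i _ => hfactor i,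
    Finset.prod_mul_distrib, Finset.prod_ite_eq', if_pos (mem_univ k), prod_const, card_univ,
    Fintype.card_fin, inv_pow]

lemma hadamardU_mul_mul_hadamardU_flipAt_apply
    {D : Matrix (Fin (2 * m + 1) → Bool) (Fin (2 * m + 1) → Bool) ℂ} (hD : D.IsDiag)
    (k : Fin (2 * m + 1)) (s : Fin (2 * m + 1) → Bool) :
    (hadamardU m * D * hadamardU m) (flipAt k s) s =
      (2 ^ (2 * m + 1))⁻¹ * ∑ d, D d d * if d k then -1 else 1 := by
  conv_lhs => rw [← hD.diagonal_diag]
  rw [Matrix.mul_apply, Finset.mul_sum]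
  refine Finset.sum_congr rfl fun d _ => ?_
  rw [mul_diagonal, mul_right_comm, hadamardU_flipAt_mul_hadamardU, diag_apply]
  ring

lemma sigmaX_apply (k : Fin (2 * m + 1)) (s s' : Fin (2 * m + 1) → Bool) :
    sigmaX m k s s' = if s' = flipAt k s then 1 else 0 :=
  rfl

lemma trace_diagonal_mul_sigmaX_mul_diagonal_mul (p q : (Fin (2 * m + 1) → Bool) → ℂ)
    (k : Fin (2 * m + 1)) (R : Matrix (Fin (2 * m + 1) → Bool) (Fin (2 * m + 1) → Bool) ℂ) :
    trace (diagonal p * sigmaX m k * diagonal q * R) =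
      ∑ s, p s * q (flipAt k s) * R (flipAt k s) s := by
  refine Finset.sum_congr rfl fun s _ => ?_
  rw [diag_apply, Matrix.mul_apply, Fintype.sum_eq_single (flipAt k s)]
  · simp [sigmaX_apply]
  · intro s' hs'
    simp [sigmaX_apply, hs']

lemma exists_mem_Icc_natCast_eq (x : Fin (2 * m + 1)) (hx : x ≠ 0) :
    ∃ j ∈ Icc 1 m, x = j ∨ -x = j := by
  have hsum : (x : ℕ) + ((-x : Fin (2 * m + 1)) : ℕ) = 2 * m + 1 := by
    rw [Fin.val_neg, if_neg hx]
    omega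
  have hpos : 0 < (x : ℕ) := Fin.pos_iff_ne_zero.mpr hx
  have hneg : 0 < ((-x : Fin (2 * m + 1)) : ℕ) := Fin.pos_iff_ne_zero.mpr (neg_ne_zero.mpr hx)
  by_cases hle : (x : ℕ) ≤ m
  · exact ⟨x, mem_Icc.mpr ⟨hpos, hle⟩, Or.inl (Fin.cast_val_eq_self x).symm⟩
  · exact ⟨(-x : Fin (2 * m + 1)), mem_Icc.mpr ⟨hneg, by omega⟩,
      Or.inr (Fin.cast_val_eq_self _).symm⟩

/-- Every site other than `k` is `k + j` or `k - j` for some `j ∈ [1, m]`, so this map is a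
bijection: the bond parities between `k` and the other sites are independent. -/
def localPattern (k : Fin (2 * m + 1)) (s : Fin (2 * m + 1) → Bool) :
    Bool × (Icc 1 m → Bool) × (Icc 1 m → Bool) :=
  (s k, fun j => xor (s k) (s (k + ((j : ℕ) : Fin (2 * m + 1)))),
    fun j => xor (s k) (s (k - ((j : ℕ) : Fin (2 * m + 1)))))

lemma localPattern_injective (k : Fin (2 * m + 1)) :
    Function.Injective (localPattern (m := m) k) := by
  intro s s' h
  simp only [localPattern, Prod.mk.injEq, funext_iff] at h
  obtain ⟨hk, hplus, hminus⟩ := h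
  funext i
  rcases eq_or_ne i k with rfl | hik
  · exact hk
  obtain ⟨j, hj, hij | hij⟩ := exists_mem_Icc_natCast_eq (i - k) (sub_ne_zero.mpr hik)
  · have := hplus ⟨j, hj⟩
    rwa [← hij, add_sub_cancel, hk, Bool.xor_right_inj] at this
  · have := hminus ⟨j, hj⟩
    rwa [← hij, sub_neg_eq_add, add_sub_cancel, hk, Bool.xor_right_inj] at this

lemma localPattern_bijective (k : Fin (2 * m + 1)) :
    Function.Bijective (localPattern (m := m) k) := by
  refine (Fintype.bijective_iff_injective_and_card _).mpr ⟨localPattern_injective k, ?_⟩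
  simp only [Fintype.card_fun, Fintype.card_prod, Fintype.card_bool, Fintype.card_fin,
    Fintype.card_coe, Nat.card_Icc, Nat.add_sub_cancel]
  ring

lemma sum_bool_exp_spin (θ : ℝ) :
    ∑ b : Bool, Complex.exp (θ * spin b * Complex.I) = 2 * Complex.cos θ := by
  simp [spin, Complex.two_cos, neg_mul, add_comm]

lemma sum_prod_exp_spin {ι : Type*} [Fintype ι] [DecidableEq ι] (θ : ι → ℝ) :
    ∑ u : ι → Bool, ∏ j, Complex.exp (θ j * spin (u j) * Complex.I) =
      ∏ j, 2 * Complex.cos (θ j) := by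
  rw [Fintype.prod_congr _ _ fun j => (sum_bool_exp_spin (θ j)).symm, Fintype.prod_sum]

noncomputable def decayFactor (α : ℝ) (m : ℕ) (t : ℝ) : ℝ :=
  ∏ j ∈ Icc 1 m, Real.cos (2 * t * kacNorm α m * eps α j) ^ 2

lemma sum_exp_energy_flipAt_sub (α t : ℝ) (k : Fin (2 * m + 1)) :
    ∑ s, Complex.exp ((t * (energy α m (flipAt k s) - energy α m s) : ℝ) * Complex.I) =
      2 ^ (2 * m + 1) * decayFactor α m t := by
  set θ : Icc 1 m → ℝ := fun j => -(2 * t * kacNorm α m * eps α j)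
  set P : (Icc 1 m → Bool) → ℂ := fun u => ∏ j, Complex.exp (θ j * spin (u j) * Complex.I)
  have hpattern : ∀ s, Complex.exp ((t * (energy α m (flipAt k s) - energy α m s) : ℝ) *
      Complex.I) = P (localPattern k s).2.1 * P (localPattern k s).2.2 := by
    intro s
    simp only [P, θ, localPattern, ← Complex.exp_add,
      ← Complex.exp_sum, spin_xor, energy_flipAt_sub]
    congr 1
    rw [← Finset.sum_add_distrib, ← Finset.sum_coe_sort (Icc 1 m)]
    push_cast
    simp only [Finset.mul_sum, Finset.sum_mul, ← Finset.sum_neg_distrib]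
    refine Finset.sum_congr rfl fun j _ => ?_
    ring
  have hP : ∑ u, P u = ∏ j, 2 * Complex.cos (θ j) := sum_prod_exp_spin θ
  rw [Finset.sum_congr rfl fun s _ => hpattern s,
    Fintype.sum_bijective _ (localPattern_bijective k) _ (fun p => P p.2.1 * P p.2.2) fun _ => rfl,
    Fintype.sum_prod_type]
  simp only [Fintype.sum_prod_type, ← Finset.mul_sum, ← Finset.sum_mul, hP, sum_const, card_univ,
    Fintype.card_bool]
  simp only [decayFactor, θ, Finset.prod_mul_distrib, prod_const, card_univ, Fintype.card_coe,
    Nat.card_Icc, Nat.add_sub_cancel]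
  rw [← Finset.prod_coe_sort (Icc 1 m)]
  push_cast
  simp only [Complex.cos_neg, Finset.prod_pow]
  ring

lemma trace_diagonal_mul_sigmaX_mul_diagonal_mul_hadamard
    (p q : (Fin (2 * m + 1) → Bool) → ℂ) (k : Fin (2 * m + 1))
    {D : Matrix (Fin (2 * m + 1) → Bool) (Fin (2 * m + 1) → Bool) ℂ} (hD : D.IsDiag) :
    trace (diagonal p * sigmaX m k * diagonal q * (hadamardU m * D * hadamardU m)) =
      (2 ^ (2 * m + 1))⁻¹ * (∑ s, p s * q (flipAt k s)) *
        trace (sigmaX m k * (hadamardU m * D * hadamardU m)) := by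
  have hone : sigmaX m k = diagonal 1 * sigmaX m k * diagonal 1 := by simp
  conv_rhs => rw [hone]
  simp only [trace_diagonal_mul_sigmaX_mul_diagonal_mul,
    hadamardU_mul_mul_hadamardU_flipAt_apply hD, ← Finset.sum_mul, Pi.one_apply, one_mul,
    sum_const, card_univ, Fintype.card_fun, Fintype.card_bool, Fintype.card_fin, nsmul_eq_mul]
  push_cast
  field_simp

theorem trace_exp_Ham_zero_conj (α t : ℝ)
    {D : Matrix (Fin (2 * m + 1) → Bool) (Fin (2 * m + 1) → Bool) ℂ} (hD : D.IsDiag)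
    (a : Fin (2 * m + 1) → ℝ) :
    trace (NormedSpace.exp ((-(Complex.I * t)) • Ham α 0 m) *
        (∑ i, (a i : ℂ) • sigmaX m i) * NormedSpace.exp ((Complex.I * t) • Ham α 0 m) *
        (hadamardU m * D * hadamardU m)) =
      decayFactor α m t *
        trace ((∑ i, (a i : ℂ) • sigmaX m i) * (hadamardU m * D * hadamardU m)) := by
  rw [exp_smul_Ham_zero, exp_smul_Ham_zero, Matrix.mul_sum, Matrix.sum_mul, Matrix.sum_mul,
    Matrix.sum_mul, trace_sum, trace_sum, Finset.mul_sum]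
  refine Finset.sum_congr rfl fun k _ => ?_
  have hphase : ∀ s, Complex.exp (-(Complex.I * t) * energy α m s) *
      Complex.exp (Complex.I * t * energy α m (flipAt k s)) =
        Complex.exp ((t * (energy α m (flipAt k s) - energy α m s) : ℝ) * Complex.I) := by
    intro s
    rw [← Complex.exp_add]
    push_cast
    ring_nf
  simp only [Matrix.mul_smul, Matrix.smul_mul, trace_smul, smul_eq_mul,
    trace_diagonal_mul_sigmaX_mul_diagonal_mul_hadamard _ _ k hD, hphase,
    sum_exp_energy_flipAt_sub]
  field_simp

lemma one_sub_prod_cos_sq_le {ι : Type*} (s : Finset ι) (θ : ι → ℝ) :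
    1 - ∏ j ∈ s, Real.cos (θ j) ^ 2 ≤ ∑ j ∈ s, θ j ^ 2 := by
  induction s using Finset.cons_induction with
  | empty => simp
  | cons a s ha ih =>
    rw [prod_cons, sum_cons]
    have hP : ∏ j ∈ s, Real.cos (θ j) ^ 2 ≤ 1 :=
      prod_le_one (fun _ _ => sq_nonneg _) fun _ _ => Real.cos_sq_le_one _
    have hsin : 1 - Real.cos (θ a) ^ 2 ≤ θ a ^ 2 := by
      rw [← Real.sin_sq]
      exact Real.sin_sq_le_sq
    nlinarith [sq_nonneg (Real.cos (θ a)), Real.cos_sq_le_one (θ a)]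

lemma decayFactor_le_one (α : ℝ) (m : ℕ) (t : ℝ) : decayFactor α m t ≤ 1 :=
  prod_le_one (fun _ _ => sq_nonneg _) fun _ _ => Real.cos_sq_le_one _

lemma eps_nonneg (α : ℝ) (j : ℕ) : 0 ≤ eps α j :=
  Real.rpow_nonneg j.cast_nonneg _

lemma eps_le_one {α : ℝ} (hα : 0 ≤ α) {j : ℕ} (hj : 1 ≤ j) : eps α j ≤ 1 :=
  Real.rpow_le_one_of_one_le_of_nonpos (by exact_mod_cast hj) (neg_nonpos.mpr hα)

lemma one_sub_decayFactor_le {α : ℝ} (hα : 0 ≤ α) (m : ℕ) (t : ℝ) :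
    1 - decayFactor α m t ≤ t ^ 2 / ∑ j ∈ Icc 1 m, eps α j := by
  calc 1 - decayFactor α m t
      ≤ ∑ j ∈ Icc 1 m, (2 * t * kacNorm α m * eps α j) ^ 2 := one_sub_prod_cos_sq_le _ _
    _ ≤ ∑ j ∈ Icc 1 m, 4 * t ^ 2 * kacNorm α m ^ 2 * eps α j := by
        refine sum_le_sum fun j hj => ?_
        have hε := eps_le_one hα (mem_Icc.mp hj).1
        rw [mul_pow, mul_pow, mul_pow]
        gcongr
        · norm_num
        · exact pow_le_of_le_one (eps_nonneg α j) hε two_ne_zero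
    _ = t ^ 2 / ∑ j ∈ Icc 1 m, eps α j := by
        rw [← mul_sum, kacNorm]
        rcases eq_or_ne (∑ j ∈ Icc 1 m, eps α j) 0 with hS | hS
        · simp [hS]
        · field_simp
          ring

lemma tendsto_sum_eps_atTop {α : ℝ} (hα : α ≤ 1) :
    Tendsto (fun m => ∑ j ∈ Icc 1 m, eps α j) atTop atTop := by
  have hdiv : ¬Summable (eps α) := by
    rw [show eps α = fun n : ℕ => (n : ℝ) ^ (-α) from rfl, Real.summable_nat_rpow]
    linarith
  have hrange := ((not_summable_iff_tendsto_nat_atTop_of_nonneg (eps_nonneg α)).mp hdiv).comp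
    (tendsto_add_atTop_nat 1)
  refine (tendsto_atTop_add_const_left _ (-eps α 0) hrange).congr fun m => ?_
  rw [Function.comp_apply, sum_range_eq_add_Ico _ (by omega : 0 < m + 1), Ico_add_one_right_eq_Icc]
  ring

end EmchRadin

theorem stmt_1_general (α : ℝ) (hα0 : 0 ≤ α) (hα1 : α < 1) (τ δ C : ℝ)
    (hδ : 0 < δ) :
    ∃ n₀ : ℕ, ∀ m : ℕ, 2 * m + 1 > n₀ →
      ∀ D : Matrix (Fin (2 * m + 1) → Bool) (Fin (2 * m + 1) → Bool) ℂ, D.IsDiag →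
      ∀ a : Fin (2 * m + 1) → ℝ, ∀ t : ℝ, |t| ≤ τ →
      ‖(Matrix.trace
          ((∑ i : Fin (2 * m + 1), ((a i : ℝ) : ℂ) • sigmaX m i) *
            (hadamardU m * D * hadamardU m)))‖ ≤ C →
      ‖(Matrix.trace
          (NormedSpace.exp ((-(Complex.I * (t : ℂ))) • Ham α 0 m) *
            (∑ i : Fin (2 * m + 1), ((a i : ℝ) : ℂ) • sigmaX m i) *
            NormedSpace.exp ((Complex.I * (t : ℂ)) • Ham α 0 m) *
            (hadamardU m * D * hadamardU m)) -
         Matrix.trace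
          ((∑ i : Fin (2 * m + 1), ((a i : ℝ) : ℂ) • sigmaX m i) *
            (hadamardU m * D * hadamardU m)))‖ < δ := by
  have hdiv := EmchRadin.tendsto_sum_eps_atTop hα1.le
  obtain ⟨M, hM⟩ := Filter.eventually_atTop.mp
    ((hdiv.eventually_gt_atTop (τ ^ 2 * C / δ)).and (hdiv.eventually_gt_atTop 0))
  refine ⟨2 * M, fun m hm D hD a t ht hC => ?_⟩
  obtain ⟨hlarge, hpos⟩ := hM m (by omega)
  rw [EmchRadin.trace_exp_Ham_zero_conj α t hD a]
  set T := Matrix.trace ((∑ i, (a i : ℂ) • sigmaX m i) * (hadamardU m * D * hadamardU m))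
  set F := EmchRadin.decayFactor α m t
  have ht2 : t ^ 2 ≤ τ ^ 2 := by
    rw [← sq_abs]
    exact pow_le_pow_left₀ (abs_nonneg t) ht 2
  calc ‖(F : ℂ) * T - T‖ = (1 - F) * ‖T‖ := by
        rw [← sub_one_mul, norm_mul, ← Complex.ofReal_one, ← Complex.ofReal_sub,
          Complex.norm_real, Real.norm_eq_abs,
          abs_of_nonpos (by linarith [EmchRadin.decayFactor_le_one α m t]), neg_sub]
    _ ≤ τ ^ 2 / (∑ j ∈ Finset.Icc 1 m, eps α j) * C := by
        refine mul_le_mul ((EmchRadin.one_sub_decayFactor_le hα0 m t).trans ?_) hC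
          (norm_nonneg _) (by positivity)
        gcongr
    _ < δ := by
        rw [div_mul_eq_mul_div, div_lt_iff₀ hpos]
        rw [div_lt_iff₀ hδ] at hlarge
        linarith

/-- Proposition 1: for `0 ≤ α < 1`, magnetic field `h = 0`, and every
`τ, δ, C > 0`, there is `n₀` such that for every odd `N = 2m+1 > n₀`, every diagonal `D` with
`ρ = U D U`, every observable `A = ∑_i a_i σ_i^x` with `|Tr(A ρ)| ≤ C`, and every `|t| ≤ τ`,
`|Tr(e^{−itH} A e^{itH} ρ) − Tr(A ρ)| < δ`. -/
theorem stmt_1 (α : ℝ) (hα0 : 0 ≤ α) (hα1 : α < 1) (τ δ C : ℝ)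
    (hτ : 0 < τ) (hδ : 0 < δ) (hC : 0 < C) :
    ∃ n₀ : ℕ, ∀ m : ℕ, 2 * m + 1 > n₀ →
      ∀ D : Matrix (Fin (2 * m + 1) → Bool) (Fin (2 * m + 1) → Bool) ℂ, D.IsDiag →
      ∀ a : Fin (2 * m + 1) → ℝ, ∀ t : ℝ, |t| ≤ τ →
      ‖(Matrix.trace
          ((∑ i : Fin (2 * m + 1), ((a i : ℝ) : ℂ) • sigmaX m i) *
            (hadamardU m * D * hadamardU m)))‖ ≤ C →
      ‖(Matrix.trace
          (NormedSpace.exp ((-(Complex.I * (t : ℂ))) • Ham α 0 m) *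
            (∑ i : Fin (2 * m + 1), ((a i : ℝ) : ℂ) • sigmaX m i) *
            NormedSpace.exp ((Complex.I * (t : ℂ)) • Ham α 0 m) *
            (hadamardU m * D * hadamardU m)) -
         Matrix.trace
          ((∑ i : Fin (2 * m + 1), ((a i : ℝ) : ℂ) • sigmaX m i) *
            (hadamardU m * D * hadamardU m)))‖ < δ :=
  stmt_1_general α hα0 hα1 τ δ C hδ
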